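/- Let (r, Ω², φ, e) be a smooth solution of the spherically symmetric Einstein–Maxwell–scalar field system on an open set U ⊆ ℝ² with e ≠ 0, and set M := |e|. Suppose p ∈ U satisfies r(p) = M, ϖ(p) = M, and ν(p) := ∂_u r(p) < 0. Then ∂_u ∂_v r(p) = 0 and ∂_u ∂_u ∂_v r(p) = 2 e² κ(p) ν(p)² / r(p)⁴ > 0, where κ := −Ω²/(4ν). -/

import Mathlib

noncomputable section

/-- Partial derivative in the ingoing null direction `u` (the first coordinate of `ℝ²`). -/
def pu (f : ℝ × ℝ → ℝ) (p : ℝ × ℝ) : ℝ := fderiv ℝ f p (1, 0)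

/-- Partial derivative in the outgoing null direction `v` (the second coordinate of `ℝ²`). -/
def pv (f : ℝ × ℝ → ℝ) (p : ℝ × ℝ) : ℝ := fderiv ℝ f p (0, 1)

/-- The Hawking mass `m = (r/2)(1 + 4νλ/Ω²)`, where `ν = ∂_u r` and `λ = ∂_v r`. -/
def hawkingMass (r Ω2 : ℝ × ℝ → ℝ) (p : ℝ × ℝ) : ℝ :=
  r p / 2 * (1 + 4 * pu r p * pv r p / Ω2 p)

/-- The renormalized Hawking mass `ϖ = m + e²/(2r)`. -/
def varpi (r Ω2 : ℝ × ℝ → ℝ) (e : ℝ) (p : ℝ × ℝ) : ℝ :=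
  hawkingMass r Ω2 p + e ^ 2 / (2 * r p)

/-- The mass aspect function `μ = 2m/r`. -/
def muQ (r Ω2 : ℝ × ℝ → ℝ) (p : ℝ × ℝ) : ℝ := 2 * hawkingMass r Ω2 p / r p

/-- `κ = -Ω²/(4ν)`. -/
def kap (r Ω2 : ℝ × ℝ → ℝ) (p : ℝ × ℝ) : ℝ := -Ω2 p / (4 * pu r p)

/-- `γ = -Ω²/(4λ)`. -/
def gam (r Ω2 : ℝ × ℝ → ℝ) (p : ℝ × ℝ) : ℝ := -Ω2 p / (4 * pv r p)

/-- The redshift factor `𝜘 = r⁻²(ϖ - e²/r)`. -/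
def redshift (r Ω2 : ℝ × ℝ → ℝ) (e : ℝ) (p : ℝ × ℝ) : ℝ :=
  (varpi r Ω2 e p - e ^ 2 / r p) / r p ^ 2

/-- A smooth solution of the spherically symmetric Einstein–Maxwell–scalar field
system on an open set `U ⊆ ℝ²`, with null coordinates `(u, v)`. -/
structure IsEMSSolution (U : Set (ℝ × ℝ)) (r Ω2 φ : ℝ × ℝ → ℝ) (e : ℝ) : Prop where
  open_U : IsOpen U
  smooth_r : ContDiffOn ℝ (⊤ : ℕ∞) r U
  smooth_Ω2 : ContDiffOn ℝ (⊤ : ℕ∞) Ω2 U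
  smooth_φ : ContDiffOn ℝ (⊤ : ℕ∞) φ U
  r_pos : ∀ p ∈ U, 0 < r p
  Ω2_pos : ∀ p ∈ U, 0 < Ω2 p
  wave_r : ∀ p ∈ U,
    pu (pv r) p
      = -Ω2 p / (4 * r p) - pu r p * pv r p / r p + Ω2 p * e ^ 2 / (4 * r p ^ 3)
  wave_Ω2 : ∀ p ∈ U,
    pu (pv (fun q => Real.log (Ω2 q))) p
      = Ω2 p / (2 * r p ^ 2) + 2 * pu r p * pv r p / r p ^ 2
        - Ω2 p * e ^ 2 / r p ^ 4 - 2 * pu φ p * pv φ p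
  raychaudhuri_u : ∀ p ∈ U,
    pu (fun q => pu r q / Ω2 q) p = -(r p / Ω2 p) * pu φ p ^ 2
  raychaudhuri_v : ∀ p ∈ U,
    pv (fun q => pv r q / Ω2 q) p = -(r p / Ω2 p) * pv φ p ^ 2
  wave_φ : ∀ p ∈ U,
    pu (pv φ) p = -(pv r p * pu φ p + pu r p * pv φ p) / r p

section lems
variable {f g : ℝ × ℝ → ℝ} {p : ℝ × ℝ} {c : ℝ}

lemma pu_congr (h : f =ᶠ[nhds p] g) : pu f p = pu g p := by
  unfold pu; rw [h.fderiv_eq]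

lemma pu_neg : pu (fun q => -f q) p = -pu f p := by
  unfold pu; rw [fderiv_fun_neg]; rfl

lemma pu_add (hf : DifferentiableAt ℝ f p) (hg : DifferentiableAt ℝ g p) :
    pu (fun q => f q + g q) p = pu f p + pu g p := by
  unfold pu; rw [fderiv_fun_add hf hg]; rfl

lemma pu_sub (hf : DifferentiableAt ℝ f p) (hg : DifferentiableAt ℝ g p) :
    pu (fun q => f q - g q) p = pu f p - pu g p := by
  unfold pu; rw [fderiv_fun_sub hf hg]; rfl

lemma pu_mul (hf : DifferentiableAt ℝ f p) (hg : DifferentiableAt ℝ g p) :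
    pu (fun q => f q * g q) p = f p * pu g p + g p * pu f p := by
  unfold pu; rw [fderiv_fun_mul hf hg]; rfl

lemma pu_cmul (hf : DifferentiableAt ℝ f p) :
    pu (fun q => c * f q) p = c * pu f p := by
  unfold pu; rw [fderiv_const_mul hf]; rfl

lemma pu_mulc (hf : DifferentiableAt ℝ f p) :
    pu (fun q => f q * c) p = pu f p * c := by
  have : (fun q => f q * c) = fun q => c * f q := by funext q; ring
  rw [this, pu_cmul hf]; ring

lemma pu_inv (hg : DifferentiableAt ℝ g p) (h0 : g p ≠ 0) :
    pu (fun q => (g q)⁻¹) p = -pu g p / g p ^ 2 := by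
  unfold pu
  have : (fun q => (g q)⁻¹) = Inv.inv ∘ g := rfl
  rw [this, fderiv_comp p (differentiableAt_inv h0) hg, fderiv_inv]
  simp only [ContinuousLinearMap.coe_comp', Function.comp_apply,
    ContinuousLinearMap.smulRight_apply, ContinuousLinearMap.one_apply, smul_eq_mul,
    ContinuousLinearMap.toSpanSingleton_apply]
  field_simp

lemma pu_div (hf : DifferentiableAt ℝ f p) (hg : DifferentiableAt ℝ g p) (h0 : g p ≠ 0) :
    pu (fun q => f q / g q) p = (pu f p * g p - f p * pu g p) / g p ^ 2 := by
  have h1 : (fun q => f q / g q) = fun q => f q * (g q)⁻¹ := by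
    funext q; rw [div_eq_mul_inv]
  rw [h1, pu_mul (g := fun q => (g q)⁻¹) hf (hg.inv h0), pu_inv hg h0]
  field_simp
  ring

lemma pu_pow3 (hf : DifferentiableAt ℝ f p) :
    pu (fun q => f q ^ 3) p = 3 * f p ^ 2 * pu f p := by
  have h1 : (fun q => f q ^ 3) = fun q => f q * (f q * f q) := by funext q; ring
  rw [h1, pu_mul (g := fun q => f q * f q) hf (hf.mul hf), pu_mul hf hf]
  ring

lemma contDiffOn_pu {U : Set (ℝ × ℝ)} (hU : IsOpen U) (hf : ContDiffOn ℝ (⊤ : ℕ∞) f U) :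
    ContDiffOn ℝ (⊤ : ℕ∞) (pu f) U := by
  have h := hf.fderiv_of_isOpen (m := (⊤ : ℕ∞)) hU ((by simp))
  exact h.clm_apply contDiffOn_const

lemma contDiffOn_pv {U : Set (ℝ × ℝ)} (hU : IsOpen U) (hf : ContDiffOn ℝ (⊤ : ℕ∞) f U) :
    ContDiffOn ℝ (⊤ : ℕ∞) (pv f) U := by
  have h := hf.fderiv_of_isOpen (m := (⊤ : ℕ∞)) hU ((by simp))
  exact h.clm_apply contDiffOn_const

end lems

/-- (Rigidity computation at a marginally degenerate sphere.)
For a smooth solution of the spherically symmetric Einstein–Maxwell–scalar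
field system with `e ≠ 0` and `M = |e|`, at any point `p ∈ U` with
`r(p) = M`, `ϖ(p) = M` and `ν(p) = ∂_u r(p) < 0` one has `∂_u∂_v r(p) = 0`
and `∂_u∂_u∂_v r(p) = 2e²κ(p)ν(p)²/r(p)⁴ > 0`. -/
theorem degenerate_sphere_rigidity
    (U : Set (ℝ × ℝ)) (r Ω2 φ : ℝ × ℝ → ℝ) (e : ℝ)
    (hsol : IsEMSSolution U r Ω2 φ e)
    (he : e ≠ 0) (M : ℝ) (hM : M = |e|)
    (p : ℝ × ℝ) (hp : p ∈ U)
    (hr : r p = M) (hϖ : varpi r Ω2 e p = M) (hν : pu r p < 0) :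
    pu (pv r) p = 0 ∧
    pu (pu (pv r)) p = 2 * e ^ 2 * kap r Ω2 p * pu r p ^ 2 / r p ^ 4 ∧
    0 < 2 * e ^ 2 * kap r Ω2 p * pu r p ^ 2 / r p ^ 4 := by
  have hU := hsol.open_U
  have hmem : U ∈ nhds p := hU.mem_nhds hp
  have hrpos : 0 < r p := hsol.r_pos p hp
  have hΩpos : 0 < Ω2 p := hsol.Ω2_pos p hp
  have hr0 : r p ≠ 0 := ne_of_gt hrpos
  have hΩ0 : Ω2 p ≠ 0 := ne_of_gt hΩpos
  have hν0 : pu r p ≠ 0 := ne_of_lt hν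
  have hM0 : M ≠ 0 := hr ▸ hr0
  have he2 : e ^ 2 = r p ^ 2 := by rw [hr, hM, sq_abs]
  -- λ = 0
  have hMpos : 0 < M := hr ▸ hrpos
  have hlam : pv r p = 0 := by
    unfold varpi hawkingMass at hϖ
    rw [hr] at hϖ
    have hM2 : e ^ 2 = M ^ 2 := by rw [hM, sq_abs]
    rw [hM2] at hϖ
    field_simp at hϖ
    have h6 : 8 * M ^ 2 * (pu r p * pv r p) = 0 := by linear_combination (2 * M ^ 2) * hϖ
    have h5 : pu r p * pv r p = 0 :=
      (mul_eq_zero.mp h6).resolve_left (by positivity)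
    rcases mul_eq_zero.mp h5 with h | h
    · exact absurd h hν0
    · exact h
  -- first conclusion
  have part1 : pu (pv r) p = 0 := by
    rw [hsol.wave_r p hp, hlam, he2]
    field_simp
    ring
  refine ⟨part1, ?_, ?_⟩
  · -- differentiability facts
    have hdr : DifferentiableAt ℝ r p :=
      ((hsol.smooth_r.contDiffAt hmem).differentiableAt (by simp))
    have hdΩ : DifferentiableAt ℝ Ω2 p :=
      ((hsol.smooth_Ω2.contDiffAt hmem).differentiableAt (by simp))
    have hdν : DifferentiableAt ℝ (pu r) p :=
      (((contDiffOn_pu hU hsol.smooth_r).contDiffAt hmem).differentiableAt (by simp))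
    have hdlam : DifferentiableAt ℝ (pv r) p :=
      (((contDiffOn_pv hU hsol.smooth_r).contDiffAt hmem).differentiableAt (by simp))
    -- eventual equality from the wave equation
    have heq : pu (pv r) =ᶠ[nhds p]
        (fun q => -Ω2 q / (4 * r q) - pu r q * pv r q / r q
          + Ω2 q * e ^ 2 / (4 * r q ^ 3)) :=
      Filter.eventually_of_mem hmem (fun q hq => hsol.wave_r q hq)
    rw [pu_congr heq]
    -- componentwise differentiability
    have hd4r : DifferentiableAt ℝ (fun q => 4 * r q) p := hdr.const_mul 4
    have hd4r0 : (4 : ℝ) * r p ≠ 0 := by positivity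
    have hdr3 : DifferentiableAt ℝ (fun q => r q ^ 3) p := hdr.pow 3
    have hd4r3 : DifferentiableAt ℝ (fun q => 4 * r q ^ 3) p := hdr3.const_mul 4
    have hd4r30 : (4 : ℝ) * r p ^ 3 ≠ 0 := by positivity
    have hdA : DifferentiableAt ℝ (fun q => -Ω2 q / (4 * r q)) p := by
      have h1 : (fun q => -Ω2 q / (4 * r q)) = fun q => -Ω2 q * (4 * r q)⁻¹ := by
        funext q; rw [div_eq_mul_inv]
      rw [h1]; exact hdΩ.neg.mul (hd4r.inv hd4r0)
    have hdB : DifferentiableAt ℝ (fun q => pu r q * pv r q / r q) p := by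
      have h1 : (fun q => pu r q * pv r q / r q)
          = fun q => pu r q * pv r q * (r q)⁻¹ := by
        funext q; rw [div_eq_mul_inv]
      rw [h1]; exact (hdν.mul hdlam).mul (hdr.inv hr0)
    have hdC : DifferentiableAt ℝ (fun q => Ω2 q * e ^ 2 / (4 * r q ^ 3)) p := by
      have h1 : (fun q => Ω2 q * e ^ 2 / (4 * r q ^ 3))
          = fun q => Ω2 q * e ^ 2 * (4 * r q ^ 3)⁻¹ := by
        funext q; rw [div_eq_mul_inv]
      rw [h1]; exact (hdΩ.mul_const _).mul (hd4r3.inv hd4r30)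
    rw [show (fun q => -Ω2 q / (4 * r q) - pu r q * pv r q / r q
          + Ω2 q * e ^ 2 / (4 * r q ^ 3))
        = (fun q => (-Ω2 q / (4 * r q) - pu r q * pv r q / r q)
          + Ω2 q * e ^ 2 / (4 * r q ^ 3)) from rfl,
      pu_add (f := fun q => -Ω2 q / (4 * r q) - pu r q * pv r q / r q) (hdA.sub hdB) hdC, pu_sub hdA hdB,
      pu_div (f := fun q => -Ω2 q) hdΩ.neg hd4r hd4r0,
      pu_div (f := fun q => pu r q * pv r q) (hdν.mul hdlam) hdr hr0,
      pu_div (hdΩ.mul_const _) hd4r3 hd4r30,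
      pu_neg, pu_cmul hdr, pu_cmul hdr3, pu_pow3 hdr,
      pu_mul hdν hdlam, pu_mulc hdΩ]
    rw [hlam, part1]
    unfold kap
    rw [he2]
    field_simp
    ring
  · have hκ : 0 < kap r Ω2 p := by
      unfold kap
      apply div_pos_of_neg_of_neg (by linarith) (by linarith)
    have he2' : 0 < e ^ 2 := by positivity
    have hν2 : 0 < pu r p ^ 2 := by positivity
    have hr4 : 0 < r p ^ 4 := by positivity
    exact div_pos (mul_pos (mul_pos (mul_pos zero_lt_two he2') hκ) hν2) hr4
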